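/- arXiv:math/0609698 — 3 statements merged into one kernel-verified Lean document; each statement's English description precedes it below -/
import Mathlib

section
/- Any polygon P = (V_0, …, V_{n-1}) in ℝ² of dimension at most 1 (i.e., whose vertex set {V_0, …, V_{n-1}} has affine hull of dimension at most 1) is convex. -/
open Set

noncomputable section

/-- The Euclidean plane. -/
abbrev Pl := EuclideanSpace ℝ (Fin 2)

/-- The `j`-th vertex of the polygon given by the list `L`, with indices taken
cyclically (so that `V_n = V_0`). -/
def vtx (L : List Pl) (j : ℕ) : Pl := L.getD (j % L.length) 0

/-- The set of vertices of the polygon `L`. -/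
def vertexSet (L : List Pl) : Set Pl := {x | x ∈ L}

/-- The union of the edges `[V_i, V_{i+1}]`, `i = 0, …, n-1` (with `V_n = V_0`). -/
def edg (L : List Pl) : Set Pl :=
  ⋃ i ∈ Finset.range L.length, segment ℝ (vtx L i) (vtx L (i + 1))

/-- A polygon is convex if the union of its edges coincides with the boundary of
the convex hull of its vertex set. -/
def IsConvexPolygon (L : List Pl) : Prop :=
  edg L = frontier (convexHull ℝ (vertexSet L))

/-- A polygon is quasi-convex if the union of its edges is contained in the boundary
of the convex hull of its vertex set. -/
def IsQuasiConvex (L : List Pl) : Prop :=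
  edg L ⊆ frontier (convexHull ℝ (vertexSet L))

/-- A polygon is strict if any three of its vertices (with increasing indices)
are non-collinear. -/
def IsStrict (L : List Pl) : Prop :=
  ∀ i j k : ℕ, i < j → j < k → k < L.length →
    ¬ Collinear ℝ ({vtx L i, vtx L j, vtx L k} : Set Pl)

/-- The points of `S` lie to one side of the segment `[A, B]`: there is a line
(the zero set of `f · = c` with `f ≠ 0`) containing `A` and `B` which is the
boundary of a closed half-plane `{x | f x ≤ c}` containing `S`. -/
def OneSide (A B : Pl) (S : Set Pl) : Prop :=
  ∃ (f : Pl →ₗ[ℝ] ℝ) (c : ℝ), f ≠ 0 ∧ f A = c ∧ f B = c ∧ ∀ p ∈ S, f p ≤ c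

/-- `ℓ` is a line in the plane. -/
def IsLine (ℓ : Set Pl) : Prop :=
  ∃ (f : Pl →ₗ[ℝ] ℝ) (c : ℝ), f ≠ 0 ∧ ℓ = {x | f x = c}

/-- The line `ℓ` is supporting to the set `S`: it meets `S` and is the boundary of
a closed half-plane containing `S`. -/
def IsSuppLine (ℓ S : Set Pl) : Prop :=
  (ℓ ∩ S).Nonempty ∧
    ∃ (f : Pl →ₗ[ℝ] ℝ) (c : ℝ), f ≠ 0 ∧ ℓ = {x | f x = c} ∧ ∀ x ∈ S, f x ≤ c

/-- The half-open segment `[A, B) = {(1-t)A + tB : 0 ≤ t < 1}` if `A ≠ B`,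
and `∅` if `A = B`. -/
def hseg (A B : Pl) : Set Pl :=
  {x | A ≠ B ∧ ∃ t : ℝ, 0 ≤ t ∧ t < 1 ∧ x = (1 - t) • A + t • B}

/-- A 2-polytope: a compact convex subset of the plane of dimension 2 whose set of
extreme points is finite. -/
def IsPolytope2 (K : Set Pl) : Prop :=
  IsCompact K ∧ Convex ℝ K ∧
    Module.finrank ℝ (affineSpan ℝ K).direction = 2 ∧
    (Set.extremePoints ℝ K).Finite

/-!
A polygon of dimension at most one has a convex hull with empty interior, so the boundary of the
hull is the hull itself and the edges lie in it. Conversely, the edges form a connected chain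
through all the vertices; a continuous linear functional that is injective on the line carrying
the vertices maps this chain onto a connected, hence convex, subset of `ℝ` containing the image
of the vertices, and pulling back through the injective functional covers the whole hull.
-/

theorem Collinear.exists_strongDual_injOn {E : Type*} [NormedAddCommGroup E] [NormedSpace ℝ E]
    {s : Set E} (hs : Collinear ℝ s) : ∃ f : StrongDual ℝ E, InjOn f s := by
  obtain ⟨p₀, v, hv⟩ := (collinear_iff_exists_forall_eq_smul_vadd s).1 hs
  obtain ⟨f, -, hfv⟩ := exists_dual_vector'' ℝ v
  refine ⟨f, fun x hx y hy hxy => ?_⟩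
  obtain ⟨r, rfl⟩ := hv x hx
  obtain ⟨t, rfl⟩ := hv y hy
  simp only [vadd_eq_add, map_add, map_smul, hfv, smul_eq_mul, add_left_inj] at hxy
  rcases eq_or_ne v 0 with rfl | hv0
  · simp
  · rw [mul_right_cancel₀ (by simpa using hv0) hxy]

theorem collinear_convexHull_iff {E : Type*} [AddCommGroup E] [Module ℝ E] {s : Set E} :
    Collinear ℝ (convexHull ℝ s) ↔ Collinear ℝ s := by
  unfold Collinear
  rw [← direction_affineSpan, affineSpan_convexHull, direction_affineSpan]

theorem Collinear.convexHull_subset_of_isPreconnected {E : Type*} [NormedAddCommGroup E]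
    [NormedSpace ℝ E] {s t : Set E} (hs : Collinear ℝ s) (ht : IsPreconnected t) (hst : s ⊆ t)
    (hts : t ⊆ convexHull ℝ s) : convexHull ℝ s ⊆ t := by
  obtain ⟨f, hf⟩ := (collinear_convexHull_iff.2 hs).exists_strongDual_injOn
  intro x hx
  have hfx : f x ∈ f '' t := by
    have hconv : Convex ℝ (f '' t) := (ht.image f f.continuous.continuousOn).convex
    have hfK : f x ∈ convexHull ℝ (f '' s) :=
      (f : E →ₗ[ℝ] ℝ).image_convexHull s ▸ mem_image_of_mem f hx
    exact convexHull_min (image_mono hst) hconv hfK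
  obtain ⟨y, hy, hyx⟩ := hfx
  rwa [← hf (hts hy) hx hyx]

theorem frontier_convexHull_eq_of_finrank_lt {E : Type*} [NormedAddCommGroup E] [NormedSpace ℝ E]
    [FiniteDimensional ℝ E] {s : Set E} (hs : s.Finite)
    (hdim : Module.finrank ℝ (affineSpan ℝ s).direction < Module.finrank ℝ E) :
    frontier (convexHull ℝ s) = convexHull ℝ s := by
  have hint : interior (convexHull ℝ s) = ∅ := by
    rw [← not_nonempty_iff_eq_empty,
      (convex_convexHull ℝ s).interior_nonempty_iff_affineSpan_eq_top, affineSpan_convexHull]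
    intro htop
    rw [htop, AffineSubspace.direction_top, finrank_top] at hdim
    exact hdim.false
  rw [frontier, (hs.isCompact_convexHull ℝ).isClosed.closure_eq, hint, sdiff_empty]

lemma vtx_mem_vertexSet {L : List Pl} (hL : L ≠ []) (i : ℕ) : vtx L i ∈ vertexSet L := by
  have hi := Nat.mod_lt i (List.length_pos_iff.2 hL)
  rw [vtx, List.getD_eq_getElem _ _ hi]
  exact List.getElem_mem hi

lemma vertexSet_subset_edg (L : List Pl) : vertexSet L ⊆ edg L := by
  intro p hp
  obtain ⟨j, hj, rfl⟩ := List.mem_iff_getElem.1 hp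
  have hv : vtx L j = L[j] := by
    rw [vtx, Nat.mod_eq_of_lt hj, List.getD_eq_getElem _ _ hj]
  exact mem_iUnion₂.2 ⟨j, Finset.mem_range.2 hj, hv ▸ left_mem_segment ℝ _ _⟩

lemma edg_subset_convexHull (L : List Pl) : edg L ⊆ convexHull ℝ (vertexSet L) := by
  refine iUnion₂_subset fun i hi => ?_
  have hL : L ≠ [] := List.ne_nil_of_length_pos (Nat.zero_lt_of_lt (Finset.mem_range.1 hi))
  exact (convex_convexHull ℝ _).segment_subset (subset_convexHull ℝ _ (vtx_mem_vertexSet hL i))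
    (subset_convexHull ℝ _ (vtx_mem_vertexSet hL (i + 1)))

lemma isPreconnected_edg (L : List Pl) : IsPreconnected (edg L) := by
  rw [edg]
  simp only [← Finset.mem_coe, Finset.coe_range]
  refine IsPreconnected.biUnion_of_chain ordConnected_Iio
    (fun i _ => (convex_segment _ _).isPreconnected) fun i _ _ => ?_
  exact ⟨vtx L (i + 1), right_mem_segment ℝ _ _, left_mem_segment ℝ _ _⟩

/-- any polygon of dimension at most 1 is convex. -/
theorem stmt_2 (L : List Pl)
    (hdim : Module.finrank ℝ (affineSpan ℝ (vertexSet L)).direction ≤ 1) :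
    IsConvexPolygon L := by
  have hcol : Collinear ℝ (vertexSet L) := by
    rwa [collinear_iff_finrank_le_one, ← direction_affineSpan]
  have hfr : frontier (convexHull ℝ (vertexSet L)) = convexHull ℝ (vertexSet L) :=
    frontier_convexHull_eq_of_finrank_lt L.finite_toSet (by rw [finrank_euclideanSpace_fin]; omega)
  rw [IsConvexPolygon, hfr]
  exact (edg_subset_convexHull L).antisymm (hcol.convexHull_subset_of_isPreconnected
    (isPreconnected_edg L) (vertexSet_subset_edg L) (edg_subset_convexHull L))
end
end

section
/- Let P = (V_0, …, V_{n-1}) be a strictly convex n-gon in ℝ² and let α, i, β be integers with 1 ≤ α < i < β ≤ n-1. Then V_α and V_β are NOT to one side of the segment [V_0, V_i]; that is, there is no line ℓ containing [V_0, V_i] that is the boundary of a closed half-plane containing {V_0, V_i, V_α, V_β}. -/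
/-!
Let `f = c` be a line through `V₀` and `Vᵢ` with `V_α` and `V_β` weakly, hence by strictness
strictly, below it. The open diagonal `(V₀, Vᵢ)` meets the interior of the hull `K`: otherwise
it would lie on the finitely many edges, one edge would contain two of its points and so lie on
the line, giving three collinear vertices. A point `w` of the line interior to `K` forces a
vertex `V_m` strictly above the line. `V_m` lies on the same arc of the polygon between `V₀` and
`Vᵢ` as `V_α` or `V_β`, and that arc crosses the line at a boundary point `z ≠ V₀, Vᵢ`. So the
line carries the interior point `w` and three boundary points of the convex set `K`; two of
these lie on the same side of `w`, and the nearer one would be interior.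
-/

open Set

noncomputable section

section LevelSets

variable {E : Type*} [AddCommGroup E] [Module ℝ E]

theorem collinear_setOf_apply_eq [FiniteDimensional ℝ E] (hE : Module.finrank ℝ E = 2)
    {f : E →ₗ[ℝ] ℝ} (hf : f ≠ 0) (c : ℝ) : Collinear ℝ {x | f x = c} := by
  have hspan : vectorSpan ℝ {x | f x = c} ≤ LinearMap.ker f := by
    rw [vectorSpan_def, Submodule.span_le]
    rintro _ ⟨x, hx, y, hy, rfl⟩
    simp_all [LinearMap.mem_ker]
  have hker := Module.Dual.finrank_ker_add_one_of_ne_zero hf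
  rw [collinear_iff_finrank_le_one]
  have := Submodule.finrank_mono hspan
  omega

theorem exists_ne_zero_apply_eq_apply [FiniteDimensional ℝ E] (hE : 1 < Module.finrank ℝ E)
    (x y : E) :
    ∃ f : E →ₗ[ℝ] ℝ, f ≠ 0 ∧ f x = f y := by
  have hlt : ℝ ∙ (y - x) < ⊤ := by
    refine lt_top_iff_ne_top.2 fun htop => ?_
    have h1 := finrank_span_le_card (R := ℝ) ({y - x} : Set E)
    rw [htop, finrank_top, toFinset_singleton, Finset.card_singleton] at h1
    omega
  obtain ⟨f, hf, hker⟩ := (ℝ ∙ (y - x)).exists_le_ker_of_lt_top hlt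
  refine ⟨f, hf, ?_⟩
  have := hker (Submodule.mem_span_singleton_self (y - x))
  rw [LinearMap.mem_ker, map_sub, sub_eq_zero] at this
  exact this.symm

theorem apply_eq_of_mem_segment {f : E →ₗ[ℝ] ℝ} {p q x y : E} (hx : x ∈ segment ℝ p q)
    (hy : y ∈ segment ℝ p q) (hxy : x ≠ y) {c : ℝ} (hfx : f x = c) (hfy : f y = c) :
    f p = c ∧ f q = c := by
  rw [segment_eq_image] at hx hy
  obtain ⟨s, -, rfl⟩ := hx
  obtain ⟨t, -, rfl⟩ := hy
  have hst : s - t ≠ 0 := sub_ne_zero.2 fun h => hxy (by rw [h])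
  simp only [map_add, map_smul, smul_eq_mul] at hfx hfy
  have hpq : f q = f p :=
    sub_eq_zero.1 <| (mul_eq_zero.1 (by linear_combination hfx - hfy)).resolve_left hst
  exact ⟨by linear_combination hfx - s * hpq, by linear_combination hfx + (1 - s) * hpq⟩

theorem exists_apply_eq_of_openSegment_subset_biUnion {ι : Type*} (s : Finset ι) (p q : ι → E)
    {f : E →ₗ[ℝ] ℝ} {x y : E} (hxy : x ≠ y) {c : ℝ} (hx : f x = c) (hy : f y = c)
    (h : openSegment ℝ x y ⊆ ⋃ j ∈ s, segment ℝ (p j) (q j)) :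
    ∃ j ∈ s, f (p j) = c ∧ f (q j) = c := by
  have hline : openSegment ℝ x y ⊆ {u | f u = c} :=
    (openSegment_subset_segment ℝ x y).trans <|
      (convex_hyperplane f.isLinear c).segment_subset hx hy
  by_contra! hne
  have hsub : ∀ j ∈ s, (openSegment ℝ x y ∩ segment ℝ (p j) (q j)).Subsingleton := by
    rintro j hj u ⟨hu, hu'⟩ v ⟨hv, hv'⟩
    by_contra huv
    obtain ⟨hp, hq⟩ := apply_eq_of_mem_segment hu' hv' huv (hline hu) (hline hv)
    exact hne j hj hp hq
  have hinf : (openSegment ℝ x y).Infinite := by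
    rw [openSegment_eq_image_lineMap]
    exact (Ioo_infinite zero_lt_one).image (AffineMap.lineMap_injective ℝ hxy).injOn
  refine hinf ((s.finite_toSet.biUnion fun j hj => (hsub j hj).finite).subset fun u hu => ?_)
  obtain ⟨j, hj, hu'⟩ := mem_iUnion₂.1 (h hu)
  exact mem_iUnion₂.2 ⟨j, hj, hu, hu'⟩

theorem exists_mem_segment_apply_eq (f : E →ₗ[ℝ] ℝ) (p : ℕ → E) {a b : ℕ} (hab : a ≠ b)
    {c : ℝ} (hc : c ∈ uIcc (f (p a)) (f (p b))) :
    ∃ j, min a b ≤ j ∧ j < max a b ∧ ∃ z ∈ segment ℝ (p j) (p (j + 1)), f z = c := by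
  wlog hlt : a < b generalizing a b
  · rw [min_comm, max_comm]
    exact this hab.symm (uIcc_comm (f (p a)) _ ▸ hc) (by omega)
  rw [min_eq_left hlt.le, max_eq_right hlt.le]
  obtain ⟨j, haj, hjb, hj⟩ :
      ∃ j, a ≤ j ∧ j < b ∧ c ∈ uIcc (f (p j)) (f (p (j + 1))) := by
    induction b, hlt using Nat.le_induction with
    | base => exact ⟨a, le_rfl, lt_add_one a, hc⟩
    | succ b hab ih =>
      rcases uIcc_subset_uIcc_union_uIcc hc with h | h
      · obtain ⟨j, haj, hjb, hj⟩ := ih (by omega) h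
        exact ⟨j, haj, hjb.trans (lt_add_one b), hj⟩
      · exact ⟨b, by omega, lt_add_one b, h⟩
  rw [← segment_eq_uIcc, ← f.coe_toAffineMap, ← image_segment] at hj
  obtain ⟨z, hz, hfz⟩ := hj
  exact ⟨j, haj, hjb, z, hz, hfz⟩

end LevelSets

section ConvexBody

variable {E : Type*} [AddCommGroup E] [Module ℝ E] [TopologicalSpace E]
  [IsTopologicalAddGroup E] [ContinuousSMul ℝ E]

theorem Convex.smul_add_mem_interior {K : Set E} (hK : Convex ℝ K) {w : E}
    (hw : w ∈ interior K) (v : E) {r s : ℝ} (h0 : 0 < r / s) (h1 : r / s < 1)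
    (hs : s • v + w ∈ closure K) : r • v + w ∈ interior K := by
  have hs0 : s ≠ 0 := by rintro rfl; simp at h0
  refine hK.openSegment_interior_closure_subset_interior hw hs
    ⟨1 - r / s, r / s, by linarith, h0, by ring, ?_⟩
  rw [smul_add, smul_smul, div_mul_cancel₀ r hs0]
  module

theorem Convex.not_collinear_of_mem_frontier {K : Set E} (hK : Convex ℝ K) {w a b z : E}
    (hw : w ∈ interior K) (ha : a ∈ frontier K) (hb : b ∈ frontier K) (hz : z ∈ frontier K)
    (hab : a ≠ b) (haz : a ≠ z) (hbz : b ≠ z) : ¬ Collinear ℝ {w, a, b, z} := by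
  intro hcol
  obtain ⟨v, hv⟩ := (collinear_iff_of_mem (mem_insert w _)).1 hcol
  -- Of two frontier points on the same side of `w`, the nearer one would be interior.
  have same_side : ∀ r s : ℝ, r ≠ s → 0 < r * s →
      r • v + w ∈ frontier K → s • v + w ∈ frontier K → False := by
    intro r s hrs hpos hr hs
    have hrs' : 0 < r / s := div_pos_iff.2 (mul_pos_iff.1 hpos)
    rcases lt_or_gt_of_ne (div_ne_one_of_ne hrs) with h1 | h1
    · exact disjoint_interior_frontier.ne_of_mem
        (hK.smul_add_mem_interior hw v hrs' h1 (frontier_subset_closure hs)) hr rfl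
    · have h0 : 0 < s / r := by rw [← inv_div]; exact inv_pos.2 hrs'
      have h2 : s / r < 1 := by rw [← inv_div]; exact inv_lt_one_of_one_lt₀ h1
      exact disjoint_interior_frontier.ne_of_mem
        (hK.smul_add_mem_interior hw v h0 h2 (frontier_subset_closure hr)) hs rfl
  have coord_ne_zero : ∀ r : ℝ, r • v + w ∈ frontier K → r ≠ 0 := by
    rintro r hr rfl
    exact disjoint_interior_frontier.ne_of_mem hw hr (by simp)
  obtain ⟨ra, rfl⟩ := hv a (by simp)
  obtain ⟨rb, rfl⟩ := hv b (by simp)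
  obtain ⟨rz, rfl⟩ := hv z (by simp)
  have ha0 := coord_ne_zero ra ha
  have hb0 := coord_ne_zero rb hb
  have hz0 := coord_ne_zero rz hz
  have hprod : 0 < (ra * rb * rz) ^ 2 := by positivity
  have hpair : 0 < ra * rb ∨ 0 < ra * rz ∨ 0 < rb * rz := by
    by_contra! h
    nlinarith [mul_nonpos_of_nonneg_of_nonpos (mul_nonneg_of_nonpos_of_nonpos h.1 h.2.1) h.2.2]
  rcases hpair with h | h | h
  · exact same_side ra rb (fun h => hab (by rw [h])) h ha hb
  · exact same_side ra rz (fun h => haz (by rw [h])) h ha hz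
  · exact same_side rb rz (fun h => hbz (by rw [h])) h hb hz

end ConvexBody

theorem exists_lt_apply_of_mem_interior_convexHull {E : Type*} [NormedAddCommGroup E]
    [NormedSpace ℝ E] [FiniteDimensional ℝ E] {f : E →ₗ[ℝ] ℝ} (hf : f ≠ 0) {S : Set E} {w : E}
    (hw : w ∈ interior (convexHull ℝ S)) : ∃ x ∈ S, f w < f x := by
  by_contra! h
  have hK : f '' convexHull ℝ S ⊆ Iic (f w) := by
    rintro _ ⟨x, hx, rfl⟩
    exact convexHull_min h (convex_halfSpace_le f.isLinear (f w)) hx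
  have hfopen := f.isOpenMap_of_finiteDimensional (LinearMap.surjective hf)
  have hopen := hfopen.image_interior_subset (convexHull ℝ S) ⟨w, hw, rfl⟩
  have : f w < f w := by simpa [interior_Iic] using interior_mono hK hopen
  exact lt_irrefl _ this

section Polygon

variable {L : List Pl}

theorem vtx_eq_getElem {j : ℕ} (hj : j < L.length) : vtx L j = L[j] := by
  rw [vtx, Nat.mod_eq_of_lt hj, List.getD_eq_getElem _ _ hj]

theorem vtx_mem_vertexSet_s6 {j : ℕ} (hj : j < L.length) : vtx L j ∈ vertexSet L := by
  rw [vtx_eq_getElem hj]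
  exact List.getElem_mem hj

theorem exists_vtx_eq_of_mem_vertexSet {x : Pl} (hx : x ∈ vertexSet L) :
    ∃ j < L.length, vtx L j = x := by
  obtain ⟨j, hj, rfl⟩ := List.mem_iff_getElem.1 hx
  exact ⟨j, hj, vtx_eq_getElem hj⟩

theorem segment_subset_edg {j : ℕ} (hj : j < L.length) :
    segment ℝ (vtx L j) (vtx L (j + 1)) ⊆ edg L :=
  subset_biUnion_of_mem (u := fun i => segment ℝ (vtx L i) (vtx L (i + 1)))
    (Finset.mem_coe.2 (Finset.mem_range.2 hj))

theorem vtx_mem_edg {j : ℕ} (hj : j < L.length) : vtx L j ∈ edg L :=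
  segment_subset_edg hj (left_mem_segment ℝ _ _)

theorem IsStrict.not_collinear (h : IsStrict L) {j k l : ℕ} (hjk : j ≠ k) (hjl : j ≠ l)
    (hkl : k ≠ l) (hj : j < L.length) (hk : k < L.length) (hl : l < L.length) :
    ¬ Collinear ℝ {vtx L j, vtx L k, vtx L l} := by
  intro hcol
  have perm : ∀ a b c : ℕ, a < b → b < c → c < L.length →
      {vtx L a, vtx L b, vtx L c} ⊆ ({vtx L j, vtx L k, vtx L l} : Set Pl) → False :=
    fun a b c hab hbc hc hsub => h a b c hab hbc hc (hcol.subset hsub)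
  rcases hjk.lt_or_gt with h1 | h1 <;> rcases hjl.lt_or_gt with h2 | h2 <;>
    rcases hkl.lt_or_gt with h3 | h3
  all_goals first
    | omega
    | exact perm j k l h1 h3 hl subset_rfl
    | exact perm j l k h2 h3 hk (by simp [insert_subset_iff])
    | exact perm k j l h1 h2 hl (by simp [insert_subset_iff])
    | exact perm k l j h3 h2 hj (by simp [insert_subset_iff])
    | exact perm l j k h2 h1 hk (by simp [insert_subset_iff])
    | exact perm l k j h3 h1 hj (by simp [insert_subset_iff])

theorem IsStrict.vtx_ne (h : IsStrict L) (hn : 3 ≤ L.length) {j k : ℕ} (hjk : j ≠ k)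
    (hj : j < L.length) (hk : k < L.length) : vtx L j ≠ vtx L k := by
  obtain ⟨l, hl, hlj, hlk⟩ : ∃ l < 3, l ≠ j ∧ l ≠ k := by
    by_cases h0 : j ≠ 0 ∧ k ≠ 0
    · exact ⟨0, by omega, Ne.symm h0.1, Ne.symm h0.2⟩
    by_cases h1 : j ≠ 1 ∧ k ≠ 1
    · exact ⟨1, by omega, Ne.symm h1.1, Ne.symm h1.2⟩
    exact ⟨2, by omega, by omega, by omega⟩
  intro hv
  refine h.not_collinear hjk (Ne.symm hlj) (Ne.symm hlk) hj hk (by omega) ?_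
  rw [hv, insert_eq_of_mem (mem_insert _ _)]
  exact collinear_pair ℝ _ _

theorem IsStrict.apply_ne (h : IsStrict L) {f : Pl →ₗ[ℝ] ℝ} (hf : f ≠ 0) {j k l : ℕ}
    (hjk : j ≠ k) (hjl : j ≠ l) (hkl : k ≠ l) (hj : j < L.length) (hk : k < L.length)
    (hl : l < L.length) {c : ℝ} (hfj : f (vtx L j) = c) (hfk : f (vtx L k) = c) :
    f (vtx L l) ≠ c := fun hfl =>
  h.not_collinear hjk hjl hkl hj hk hl <|
    (collinear_setOf_apply_eq finrank_euclideanSpace_fin hf c).subset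
      (by simp [insert_subset_iff, hfj, hfk, hfl])

theorem IsStrict.vtx_not_mem_segment (h : IsStrict L) {j k : ℕ} (hkj : k ≠ j)
    (hkj' : k ≠ j + 1) (hk : k < L.length) (hj : j + 1 < L.length) :
    vtx L k ∉ segment ℝ (vtx L j) (vtx L (j + 1)) := fun hmem =>
  h.not_collinear hkj hkj' (by omega) hk (by omega) hj <|
    (mem_segment_iff_wbtw.1 hmem).collinear.subset (by simp [insert_subset_iff])

theorem IsStrict.exists_mem_edg_apply_eq (h : IsStrict L) (f : Pl →ₗ[ℝ] ℝ) {k m : ℕ}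
    (hkm : k ≠ m) (hk : k < L.length) (hm : m < L.length) {c : ℝ} (hfk : f (vtx L k) < c)
    (hfm : c < f (vtx L m)) :
    ∃ z ∈ edg L, f z = c ∧ ∀ l < L.length, l < min k m ∨ max k m < l → z ≠ vtx L l := by
  obtain ⟨j, hkj, hjm, z, hz, hfz⟩ :=
    exists_mem_segment_apply_eq f (vtx L) hkm (mem_uIcc.2 (Or.inl ⟨hfk.le, hfm.le⟩))
  refine ⟨z, segment_subset_edg (by omega) hz, hfz, fun l hl hlkm hzl => ?_⟩
  exact h.vtx_not_mem_segment (by omega) (by omega) hl (by omega) (hzl ▸ hz)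

theorem IsStrict.openSegment_inter_interior_nonempty (h : IsStrict L)
    (hconv : IsConvexPolygon L) {a b : ℕ} (hab : a + 1 < b) (hb : b < L.length)
    (hab' : 0 < a ∨ b + 1 < L.length) :
    (openSegment ℝ (vtx L a) (vtx L b) ∩ interior (convexHull ℝ (vertexSet L))).Nonempty := by
  by_contra hempty
  have hV : vtx L a ≠ vtx L b := h.vtx_ne (by omega) (by omega) (by omega) hb
  have hsub : openSegment ℝ (vtx L a) (vtx L b) ⊆ edg L := fun x hx => hconv ▸
    ⟨subset_closure <| (convex_convexHull ℝ _).openSegment_subset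
        (subset_convexHull ℝ _ (vtx_mem_vertexSet_s6 (by omega)))
        (subset_convexHull ℝ _ (vtx_mem_vertexSet_s6 hb)) hx,
      fun hxI => hempty ⟨x, hx, hxI⟩⟩
  obtain ⟨f, hf, hfab⟩ := exists_ne_zero_apply_eq_apply
    (by rw [finrank_euclideanSpace_fin]; norm_num) (vtx L a) (vtx L b)
  obtain ⟨j, hj, hj0, hj1⟩ := exists_apply_eq_of_openSegment_subset_biUnion
    (Finset.range L.length) (vtx L) (fun j => vtx L (j + 1)) hV rfl hfab.symm hsub
  rw [Finset.mem_range] at hj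
  have hoff : ∀ k < L.length, k ≠ a → k ≠ b → f (vtx L k) ≠ f (vtx L a) :=
    fun k hk hka hkb =>
      h.apply_ne hf (by omega) (Ne.symm hka) (Ne.symm hkb) (by omega) hb hk rfl hfab.symm
  by_cases hja : j = a
  · exact hoff (j + 1) (by omega) (by omega) (by omega) hj1
  by_cases hjb : j = b
  · by_cases hbn : b + 1 < L.length
    · exact hoff (b + 1) hbn (by omega) (by omega) (hjb ▸ hj1)
    · have hn : vtx L (b + 1) = vtx L 0 := by simp [vtx, show b + 1 = L.length by omega]
      exact hoff 0 (by omega) (by omega) (by omega) (hn ▸ hjb ▸ hj1)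
  exact hoff j hj hja hjb hj0

end Polygon

/-- for a strictly convex polygon and `1 ≤ α < i < β ≤ n-1`, the
vertices `V_α` and `V_β` are not to one side of the segment `[V_0, V_i]`. -/
theorem stmt_6 (L : List Pl) (hstrict : IsStrict L) (hconv : IsConvexPolygon L)
    (α i β : ℕ) (hα : 1 ≤ α) (hαi : α < i) (hiβ : i < β) (hβ : β ≤ L.length - 1) :
    ¬ OneSide (vtx L 0) (vtx L i)
        ({vtx L 0, vtx L i, vtx L α, vtx L β} : Set Pl) := by
  rintro ⟨f, c, hf, h0, hi, hle⟩
  obtain ⟨w, hwO, hwI⟩ := hstrict.openSegment_inter_interior_nonempty hconv (a := 0) (b := i)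
    (by omega) (by omega) (Or.inr (by omega))
  have hfw : f w = c := (convex_hyperplane f.isLinear c).openSegment_subset h0 hi hwO
  obtain ⟨_, hx, hfm⟩ := exists_lt_apply_of_mem_interior_convexHull hf hwI
  obtain ⟨m, hm, rfl⟩ := exists_vtx_eq_of_mem_vertexSet hx
  rw [hfw] at hfm
  have hoff : ∀ k < L.length, k ≠ 0 → k ≠ i → f (vtx L k) ≠ c := fun k hk hk0 hki =>
    hstrict.apply_ne hf (by omega) (Ne.symm hk0) (Ne.symm hki) (by omega) (by omega) hk h0 hi
  have hfα : f (vtx L α) < c :=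
    (hle _ (by simp)).lt_of_ne (hoff α (by omega) (by omega) (by omega))
  have hfβ : f (vtx L β) < c :=
    (hle _ (by simp)).lt_of_ne (hoff β (by omega) (by omega) (by omega))
  have hm0 : m ≠ 0 := by rintro rfl; linarith
  have hmi : m ≠ i := by rintro rfl; linarith
  obtain ⟨k, hk, hfk, hkm, harc⟩ : ∃ k < L.length, f (vtx L k) < c ∧ k ≠ m ∧
      0 < min k m ∧ (max k m < i ∨ i < min k m) := by
    rcases lt_or_gt_of_ne hmi with hmi | hmi
    · exact ⟨α, by omega, hfα, by rintro rfl; linarith, by omega, Or.inl (by omega)⟩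
    · exact ⟨β, by omega, hfβ, by rintro rfl; linarith, by omega, Or.inr (by omega)⟩
  obtain ⟨z, hz, hfz, hzV⟩ := hstrict.exists_mem_edg_apply_eq f hkm hk hm hfk hfm
  refine (convex_convexHull ℝ _).not_collinear_of_mem_frontier hwI
    (hconv ▸ vtx_mem_edg (by omega)) (hconv ▸ vtx_mem_edg (by omega)) (hconv ▸ hz)
    (hstrict.vtx_ne (by omega) (by omega) (by omega) (by omega))
    (hzV 0 (by omega) (by omega)).symm (hzV i (by omega) (by omega)).symm ?_
  exact (collinear_setOf_apply_eq finrank_euclideanSpace_fin hf c).subset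
    (by simp [insert_subset_iff, hfw, h0, hi, hfz])
end
end

section
/- If P = (V_0, …, V_{n-1}) is an ordinary quasi-convex polygon in ℝ² of dimension 2 (i.e., the affine hull of its vertex set has dimension 2) and V_1 is an extreme point of conv P, then the points V_0, V_1, V_2 are non-collinear. -/
open Set

noncomputable section

/-!
Let `s` be the line through `V₀, V₁, V₂` and `K` the convex hull. Since the polygon is not
contained in `s`, the maximal cyclic run of consecutive vertices on `s` through `V₁` has two ends,
each joined by an edge to a vertex off `s`. That edge lies in `∂K`, so by convexity the end is an
extreme point of the chord `K ∩ s`; so is `V₁`. The run is shorter than the polygon and the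
vertices are distinct, so these are three distinct extreme points of a segment, one of which
would lie between the other two.
-/

section Plane

variable {E : Type*} [NormedAddCommGroup E] [NormedSpace ℝ E] [FiniteDimensional ℝ E]

theorem Convex.smul_add_smul_add_smul_mem_interior (hE : Module.finrank ℝ E = 2)
    {K : Set E} (hK : Convex ℝ K) {u w y : E} (hu : u ∈ K) (hw : w ∈ K) (hy : y ∈ K)
    (h : ¬ Collinear ℝ ({u, w, y} : Set E)) {a b c : ℝ}
    (ha : 0 < a) (hb : 0 < b) (hc : 0 < c) (habc : a + b + c = 1) :
    a • u + b • w + c • y ∈ interior K := by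
  have hind : AffineIndependent ℝ ![u, w, y] := affineIndependent_iff_not_collinear_set.2 h
  let B : AffineBasis (Fin 3) ℝ E :=
    ⟨![u, w, y], hind, hind.affineSpan_eq_top_iff_card_eq_finrank_add_one.mpr (by simp [hE])⟩
  have hsum : ∑ i, ![a, b, c] i = 1 := by simp [Fin.sum_univ_three, habc]
  have hBf : ⇑B = ![u, w, y] := rfl
  have hcomb : a • u + b • w + c • y = Finset.univ.affineCombination ℝ B ![a, b, c] := by
    rw [Finset.affineCombination_eq_linear_combination _ _ _ hsum]
    simp [hBf, Fin.sum_univ_three]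
  have hB : Set.range B ⊆ K := by
    rintro _ ⟨i, rfl⟩
    fin_cases i <;> assumption
  refine interior_mono (convexHull_min hB hK) ?_
  rw [B.interior_convexHull, hcomb]
  intro i
  rw [B.coord_apply_combination_of_mem (Finset.mem_univ i) hsum]
  fin_cases i <;> simpa

/-- Otherwise the midpoint of `[x, y]` would lie in the interior of the triangle `u w y`. -/
theorem Convex.collinear_of_segment_subset_frontier (hE : Module.finrank ℝ E = 2)
    {K : Set E} (hK : Convex ℝ K) {u w x y : E} (hu : u ∈ K) (hw : w ∈ K) (hy : y ∈ K)
    (hx : x ∈ openSegment ℝ u w) (hxy : segment ℝ x y ⊆ frontier K) :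
    Collinear ℝ ({u, w, y} : Set E) := by
  by_contra hncol
  obtain ⟨a, b, ha, hb, hab, rfl⟩ := hx
  have hmid : (1 / 2 : ℝ) • (a • u + b • w) + (1 / 2 : ℝ) • y ∈ frontier K :=
    hxy ⟨1 / 2, 1 / 2, by norm_num, by norm_num, by norm_num, rfl⟩
  have hmid' : (1 / 2 : ℝ) • (a • u + b • w) + (1 / 2 : ℝ) • y ∈ interior K := by
    convert hK.smul_add_smul_add_smul_mem_interior hE hu hw hy hncol (a := a / 2) (b := b / 2)
      (by positivity) (by positivity) (by norm_num : (0 : ℝ) < 1 / 2) (by linarith) using 1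
    module
  exact hmid.2 hmid'

theorem Convex.mem_extremePoints_inter_of_segment_subset_frontier
    (hE : Module.finrank ℝ E = 2) {K : Set E} (hK : Convex ℝ K) (s : AffineSubspace ℝ E)
    {x y : E} (hx : x ∈ K ∩ s) (hy : y ∈ K) (hys : y ∉ s)
    (hxy : segment ℝ x y ⊆ frontier K) : x ∈ (K ∩ s).extremePoints ℝ := by
  refine mem_extremePoints.2 ⟨hx, fun u hu w hw hxuw => ?_⟩
  by_cases huw : u = w
  · subst huw
    rw [openSegment_same, Set.mem_singleton_iff] at hxuw
    exact ⟨hxuw.symm, hxuw.symm⟩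
  · have hcol := hK.collinear_of_segment_subset_frontier hE hu.1 hw.1 hy hxuw hxy
    have hyuw : y ∈ line[ℝ, u, w] := hcol.mem_affineSpan_of_mem_of_ne (by simp) (by simp)
      (by simp) huw
    exact absurd (affineSpan_pair_le_of_mem_of_mem hu.2 hw.2 hyuw) hys

end Plane

theorem Collinear.eq_or_eq_or_eq_of_mem_extremePoints {E : Type*} [AddCommGroup E]
    [Module ℝ E] {A : Set E} (hA : Collinear ℝ A) {x y z : E} (hx : x ∈ A.extremePoints ℝ)
    (hy : y ∈ A.extremePoints ℝ) (hz : z ∈ A.extremePoints ℝ) : x = y ∨ y = z ∨ z = x := by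
  have hxyz : Collinear ℝ ({x, y, z} : Set E) :=
    hA.subset (Set.insert_subset hx.1 (Set.insert_subset hy.1 (Set.singleton_subset_iff.2 hz.1)))
  rcases hxyz.wbtw_or_wbtw_or_wbtw with h | h | h
  · rcases (mem_extremePoints_iff_forall_segment.1 hy).2 x hx.1 z hz.1 h.mem_segment with h' | h'
    · exact Or.inl h'
    · exact Or.inr (Or.inl h'.symm)
  · rcases (mem_extremePoints_iff_forall_segment.1 hz).2 y hy.1 x hx.1 h.mem_segment with h' | h'
    · exact Or.inr (Or.inl h')
    · exact Or.inr (Or.inr h'.symm)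
  · rcases (mem_extremePoints_iff_forall_segment.1 hx).2 z hz.1 y hy.1 h.mem_segment with h' | h'
    · exact Or.inr (Or.inr h')
    · exact Or.inl h'.symm

theorem Function.Periodic.exists_maximal_run {P : ℕ → Prop} {n c : ℕ}
    (hP : Function.Periodic P n) (hn : 0 < n) (hnc : n ≤ c) (hc : P c) {q : ℕ} (hq : ¬ P q) :
    ∃ a b, a < c ∧ c < b ∧ b ≤ a + n ∧ ¬ P a ∧ ¬ P b ∧ ∀ i, a < i → i < b → P i := by
  classical
  set a := Nat.findGreatest (fun i => ¬ P i) c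
  have hqn : ¬ P (q % n) := by rwa [hP.map_mod_nat]
  have ha : ¬ P a := Nat.findGreatest_spec (P := fun i => ¬ P i) (((q.mod_lt hn).le).trans hnc) hqn
  have hac : a < c := lt_of_le_of_ne (Nat.findGreatest_le c) fun h => ha (h ▸ hc)
  have hca : c < a + n := by
    by_contra! h
    have : a + n ≤ a := Nat.le_findGreatest h (by rwa [hP a])
    omega
  have hex : ∃ b, c < b ∧ ¬ P b := ⟨a + n, hca, by rwa [hP a]⟩
  refine ⟨a, Nat.find hex, hac, (Nat.find_spec hex).1, Nat.find_min' hex ⟨hca, by rwa [hP a]⟩,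
    ha, (Nat.find_spec hex).2, fun i hai hib => ?_⟩
  by_contra hi
  rcases le_or_gt i c with hic | hci
  · exact Nat.findGreatest_is_greatest hai hic hi
  · exact Nat.find_min hex hib ⟨hci, hi⟩

section Polygon

variable {L : List Pl}

theorem vtx_periodic (L : List Pl) : Function.Periodic (vtx L) L.length := fun j => by
  simp [vtx]

theorem vtx_mem (hL : 0 < L.length) (j : ℕ) : vtx L j ∈ vertexSet L := by
  rw [vtx, List.getD_eq_getElem _ _ (j.mod_lt hL)]
  exact List.getElem_mem _

theorem exists_vtx_eq {x : Pl} (hx : x ∈ vertexSet L) : ∃ i, vtx L i = x := by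
  obtain ⟨i, hi, rfl⟩ := List.mem_iff_getElem.1 hx
  exact ⟨i, by rw [vtx, Nat.mod_eq_of_lt hi, List.getD_eq_getElem _ _ hi]⟩

theorem segment_vtx_subset_edg (hL : 0 < L.length) (j : ℕ) :
    segment ℝ (vtx L j) (vtx L (j + 1)) ⊆ edg L := by
  have hsucc : vtx L (j % L.length + 1) = vtx L (j + 1) := by simp [vtx, Nat.add_mod]
  rw [← (vtx_periodic L).map_mod_nat j, ← hsucc]
  exact Set.subset_biUnion_of_mem (u := fun i => segment ℝ (vtx L i) (vtx L (i + 1)))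
    (Finset.mem_range.2 (j.mod_lt hL))

theorem eq_of_vtx_eq (hL : L.Nodup) {i j : ℕ} (hij : i ≤ j) (hji : j < i + L.length)
    (h : vtx L i = vtx L j) : i = j := by
  have hn : 0 < L.length := by omega
  rw [vtx, vtx, List.getD_eq_getElem _ _ (i.mod_lt hn), List.getD_eq_getElem _ _ (j.mod_lt hn),
    hL.getElem_inj_iff] at h
  have := Nat.sub_mod_eq_zero_of_mod_eq h.symm
  rw [Nat.mod_eq_of_lt (by omega)] at this
  omega

theorem exists_vtx_not_mem {s : AffineSubspace ℝ Pl}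
    (hs : Module.finrank ℝ s.direction < Module.finrank ℝ (affineSpan ℝ (vertexSet L)).direction) :
    ∃ i, vtx L i ∉ s := by
  by_contra! h
  have hle : affineSpan ℝ (vertexSet L) ≤ s := affineSpan_le.2 fun x hx => by
    obtain ⟨i, rfl⟩ := exists_vtx_eq hx
    exact h i
  exact hs.not_ge (Submodule.finrank_mono (AffineSubspace.direction_le hle))

theorem IsQuasiConvex.vtx_mem_extremePoints_inter (hqc : IsQuasiConvex L) (hL : 0 < L.length)
    (s : AffineSubspace ℝ Pl) {i j : ℕ} (hij : j = i + 1 ∨ i = j + 1) (hi : vtx L i ∈ s)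
    (hj : vtx L j ∉ s) : vtx L i ∈ (convexHull ℝ (vertexSet L) ∩ s).extremePoints ℝ := by
  have hK : ∀ k, vtx L k ∈ convexHull ℝ (vertexSet L) :=
    fun k => subset_convexHull ℝ _ (vtx_mem hL k)
  have hedge : segment ℝ (vtx L i) (vtx L j) ⊆ frontier (convexHull ℝ (vertexSet L)) := by
    rcases hij with rfl | rfl
    · exact (segment_vtx_subset_edg hL i).trans hqc
    · rw [segment_symm]
      exact (segment_vtx_subset_edg hL j).trans hqc
  exact (convex_convexHull ℝ _).mem_extremePoints_inter_of_segment_subset_frontier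
    finrank_euclideanSpace_fin s ⟨hK i, hi⟩ (hK j) hj hedge

end Polygon

/-- in an ordinary quasi-convex polygon of dimension 2, if `V_1` is an
extreme point of the convex hull, then `V_0, V_1, V_2` are non-collinear. -/
theorem stmt_17 (L : List Pl) (hord : L.Nodup) (hqc : IsQuasiConvex L)
    (hdim : Module.finrank ℝ (affineSpan ℝ (vertexSet L)).direction = 2)
    (hext : vtx L 1 ∈ Set.extremePoints ℝ (convexHull ℝ (vertexSet L))) :
    ¬ Collinear ℝ ({vtx L 0, vtx L 1, vtx L 2} : Set Pl) := by
  intro hcol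
  set n := L.length
  set s := affineSpan ℝ {vtx L 0, vtx L 1, vtx L 2}
  have hn : 0 < n := List.length_pos_iff.2 fun h => by simp [h, vertexSet] at hext
  have hs : Collinear ℝ (s : Set Pl) := by
    rw [collinear_iff_rank_le_one, ← AffineSubspace.direction_eq_vectorSpan, direction_affineSpan]
    exact hcol
  obtain ⟨q, hq⟩ := exists_vtx_not_mem (L := L) (s := s) (by
    have : Module.finrank ℝ s.direction ≤ 1 := hs.finrank_le_one
    omega)
  have hmem : ∀ k ≤ 2, vtx L (n + k) ∈ s := fun k hk => by
    rw [add_comm, vtx_periodic L k]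
    interval_cases k <;> exact mem_affineSpan ℝ (by simp)
  obtain ⟨a, b, hac, hcb, hba, ha, hb, hrun⟩ :=
    ((vtx_periodic L).comp (· ∈ s)).exists_maximal_run hn (Nat.le_succ n) (hmem 1 (by norm_num)) hq
  have han : a < n :=
    lt_of_le_of_ne (Nat.lt_succ_iff.1 hac) fun h => ha (h ▸ hmem 0 (by norm_num))
  have hnb : n + 2 < b := lt_of_le_of_ne hcb fun h => hb (h ▸ hmem 2 le_rfl)
  have hstart := hqc.vtx_mem_extremePoints_inter hn s (Or.inr rfl)
    (hrun (a + 1) (by omega) (by omega)) ha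
  have hend := hqc.vtx_mem_extremePoints_inter hn s (Or.inl (by omega))
    (hrun (b - 1) (by omega) (by omega)) hb
  have hmid : vtx L (n + 1) ∈ (convexHull ℝ (vertexSet L) ∩ s).extremePoints ℝ := by
    rw [add_comm, vtx_periodic L 1]
    exact inter_extremePoints_subset_extremePoints_of_subset Set.inter_subset_left
      ⟨⟨hext.1, mem_affineSpan ℝ (by simp)⟩, hext⟩
  rcases (hs.subset Set.inter_subset_right).eq_or_eq_or_eq_of_mem_extremePoints hstart hmid hend
    with h | h | h
  · have := eq_of_vtx_eq hord (by omega) (by omega) h; omega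
  · have := eq_of_vtx_eq hord (by omega) (by omega) h; omega
  · have := eq_of_vtx_eq hord (by omega) (by omega) h.symm; omega
end
end
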